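/- arXiv:0805.2377 — 2 statements merged into one kernel-verified Lean document; each statement's English description precedes it below -/
import Mathlib

section
/- Let A be a k-algebra. The assignment D ↦ D^* gives a bijection between finite-dimensional simple subcoalgebras D of A^o and finite-dimensional simple algebra quotients of A (equivalently, isomorphism classes of finite-dimensional simple A-modules). -/
/-!
Annihilators give an inclusion-reversing bijection between the finite-dimensional subspaces of
`A*` and the finite-codimensional subspaces of `A` (`Subspace.orderIsoFiniteCodimDim`). Under it,
subcoalgebras of `A^o` correspond to two-sided ideals: `f (a * b) = ∑ gᵢ a * hᵢ b` with `gᵢ, hᵢ ∈ D`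
makes the common kernel of `D` two-sided, and conversely, if `I` is a two-sided ideal of finite
codimension, expanding the class of `a` in a basis of `A ⧸ I` splits `f (a * b)` for `f` vanishing
on `I`. An inclusion-reversing bijection matches minimal nonzero members with maximal proper ones.
-/

variable (k A : Type*) [Field k] [Ring A] [Algebra k A]

/-- `f ∈ A^o` : the kernel of `f` contains a two-sided ideal of finite codimension. -/
def memFiniteDual (f : Module.Dual k A) : Prop :=
  ∃ I : Submodule k A, (∀ (a : A), ∀ x ∈ I, a * x ∈ I) ∧ (∀ (a : A), ∀ x ∈ I, x * a ∈ I) ∧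
    FiniteDimensional k (A ⧸ I) ∧ ∀ x ∈ I, f x = 0

/-- A subspace `D` of `A*` is a subcoalgebra of `A^o` if it consists of elements of `A^o`
and is closed under the comultiplication dual to the multiplication of `A`. -/
def IsSubcoalgebraOfDual (D : Submodule k (Module.Dual k A)) : Prop :=
  (∀ f ∈ D, memFiniteDual k A f) ∧
  ∀ f ∈ D, ∃ (n : ℕ) (g h : Fin n → Module.Dual k A),
    (∀ i, g i ∈ D ∧ h i ∈ D) ∧ ∀ a b : A, f (a * b) = ∑ i, g i a * h i b

/-- The two-sidedness condition for a `k`-subspace of `A`. -/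
def IsTwoSided (I : Submodule k A) : Prop :=
  (∀ (a : A), ∀ x ∈ I, a * x ∈ I) ∧ (∀ (a : A), ∀ x ∈ I, x * a ∈ I)

section

variable {k A}

def IsSimpleSubcoalgebraOfDual (D : Submodule k (Module.Dual k A)) : Prop :=
  IsSubcoalgebraOfDual k A D ∧ FiniteDimensional k D ∧ D ≠ ⊥ ∧
    ∀ D' ≤ D, IsSubcoalgebraOfDual k A D' → D' = ⊥ ∨ D' = D

def IsSimpleQuotientKernel (I : Submodule k A) : Prop :=
  IsTwoSided k A I ∧ FiniteDimensional k (A ⧸ I) ∧ I ≠ ⊤ ∧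
    ∀ J : Submodule k A, IsTwoSided k A J → I ≤ J → J = I ∨ J = ⊤

theorem IsSubcoalgebraOfDual.isTwoSided_dualCoannihilator {D : Submodule k (Module.Dual k A)}
    (hD : IsSubcoalgebraOfDual k A D) : IsTwoSided k A D.dualCoannihilator := by
  have hvanish : ∀ x ∈ D.dualCoannihilator, ∀ g ∈ D, g x = 0 :=
    fun x hx => (Submodule.mem_dualCoannihilator x).mp hx
  refine ⟨fun a x hx => (Submodule.mem_dualCoannihilator _).mpr fun f hf => ?_,
    fun a x hx => (Submodule.mem_dualCoannihilator _).mpr fun f hf => ?_⟩ <;>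
  obtain ⟨n, g, h, hgh, hrep⟩ := hD.2 f hf <;>
  rw [hrep] <;>
  refine Finset.sum_eq_zero fun i _ => ?_
  · rw [hvanish x hx _ (hgh i).2, mul_zero]
  · rw [hvanish x hx _ (hgh i).1, zero_mul]

theorem IsTwoSided.isSubcoalgebraOfDual_dualAnnihilator {I : Submodule k A}
    (hI : IsTwoSided k A I) [FiniteDimensional k (A ⧸ I)] :
    IsSubcoalgebraOfDual k A I.dualAnnihilator := by
  obtain ⟨hleft, hright⟩ := hI
  refine ⟨fun f hf => ⟨I, hleft, hright, inferInstance, (Submodule.mem_dualAnnihilator f).mp hf⟩,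
    fun f hf => ?_⟩
  rw [Submodule.mem_dualAnnihilator] at hf
  -- `b ↦ f (a * b)` only depends on `a` modulo the right ideal `I`
  let φ : A ⧸ I →ₗ[k] Module.Dual k A :=
    I.liftQ ((LinearMap.mul k A).compr₂ f) fun x hx => by
      ext b
      exact hf _ (hright b x hx)
  have hφ : ∀ q, φ q ∈ I.dualAnnihilator := by
    rintro ⟨a⟩
    exact (Submodule.mem_dualAnnihilator _).mpr fun x hx => hf _ (hleft a x hx)
  let b := Module.finBasis k (A ⧸ I)
  refine ⟨_, fun i => (b.coord i).comp I.mkQ, fun i => φ (b i), fun i => ⟨?_, hφ _⟩, fun a c => ?_⟩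
  · refine (Submodule.mem_dualAnnihilator _).mpr fun x hx => ?_
    simp [(Submodule.Quotient.mk_eq_zero I).mpr hx]
  · calc f (a * c) = φ (I.mkQ a) c := rfl
      _ = φ (∑ i, b.repr (I.mkQ a) i • b i) c := by rw [b.sum_repr]
      _ = _ := by
        simp only [map_sum, map_smul, LinearMap.sum_apply, LinearMap.smul_apply,
          smul_eq_mul, LinearMap.comp_apply, Module.Basis.coord_apply]

theorem IsSimpleSubcoalgebraOfDual.isSimpleQuotientKernel_dualCoannihilator
    {D : Submodule k (Module.Dual k A)} (hD : IsSimpleSubcoalgebraOfDual D) :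
    IsSimpleQuotientKernel D.dualCoannihilator := by
  obtain ⟨hsub, hfin, hne, hmin⟩ := hD
  have hann : D.dualCoannihilator.dualAnnihilator = D :=
    Subspace.dualCoannihilator_dualAnnihilator_eq
  have hfin' : FiniteDimensional k (A ⧸ D.dualCoannihilator) :=
    Subspace.finiteDimensional_quot_dualCoannihilator_iff.mpr hfin
  refine ⟨hsub.isTwoSided_dualCoannihilator, hfin', fun htop => hne ?_, fun J hJ hle => ?_⟩
  · rw [← hann, htop, Submodule.dualAnnihilator_top]
  have : FiniteDimensional k (A ⧸ J) :=
    Module.Finite.of_surjective _ (Submodule.factor_surjective hle)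
  rcases hmin _ ((Submodule.dualAnnihilator_anti hle).trans hann.le)
      hJ.isSubcoalgebraOfDual_dualAnnihilator with hbot | heq
  · exact Or.inr (Submodule.dualAnnihilator_eq_bot_iff.mp hbot)
  · rw [← heq, Subspace.dualAnnihilator_dualCoannihilator_eq]
    exact Or.inl rfl

theorem IsSimpleQuotientKernel.isSimpleSubcoalgebraOfDual_dualAnnihilator {I : Submodule k A}
    (hI : IsSimpleQuotientKernel I) : IsSimpleSubcoalgebraOfDual I.dualAnnihilator := by
  obtain ⟨htwo, hfin, hne, hmax⟩ := hI
  have hfin' : FiniteDimensional k I.dualAnnihilator :=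
    Submodule.finite_dualAnnihilator_iff.mpr hfin
  refine ⟨htwo.isSubcoalgebraOfDual_dualAnnihilator, hfin',
    mt Submodule.dualAnnihilator_eq_bot_iff.mp hne, fun D' hle hD' => ?_⟩
  have : FiniteDimensional k D' := Submodule.finiteDimensional_of_le hle
  have hann : D'.dualCoannihilator.dualAnnihilator = D' :=
    Subspace.dualCoannihilator_dualAnnihilator_eq
  rcases hmax _ hD'.isTwoSided_dualCoannihilator
      (Submodule.le_dualAnnihilator_iff_le_dualCoannihilator.mp hle) with heq | htop
  · exact Or.inr (by rw [← hann, heq])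
  · exact Or.inl (by rw [← hann, htop, Submodule.dualAnnihilator_top])

end

/-- There is a bijection `D ↦ D*` between the finite-dimensional simple subcoalgebras of
`A^o` and the finite-dimensional simple algebra quotients of `A` (encoded by their kernels:
two-sided ideals `I` of finite codimension that are maximal among two-sided ideals, so that
`A/I` is a finite-dimensional simple algebra); it sends `D` to the common kernel
`{a | f(a) = 0 for all f ∈ D}`. -/
theorem simple_subcoalgebras_biject_with_simple_quotients :
    ∃ e : {D : Submodule k (Module.Dual k A) //
            IsSubcoalgebraOfDual k A D ∧ FiniteDimensional k D ∧ D ≠ ⊥ ∧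
            ∀ D' ≤ D, IsSubcoalgebraOfDual k A D' → D' = ⊥ ∨ D' = D} ≃
          {I : Submodule k A // IsTwoSided k A I ∧ FiniteDimensional k (A ⧸ I) ∧ I ≠ ⊤ ∧
            ∀ J : Submodule k A, IsTwoSided k A J → I ≤ J → J = I ∨ J = ⊤},
      ∀ D, ∀ a : A, a ∈ (e D : Submodule k A) ↔ ∀ f ∈ (D : Submodule k (Module.Dual k A)), f a = 0 :=
  ⟨{ toFun := fun D => ⟨D.1.dualCoannihilator,
        IsSimpleSubcoalgebraOfDual.isSimpleQuotientKernel_dualCoannihilator D.2⟩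
     invFun := fun I => ⟨I.1.dualAnnihilator,
        IsSimpleQuotientKernel.isSimpleSubcoalgebraOfDual_dualAnnihilator I.2⟩
     left_inv := fun D => Subtype.ext <|
        have : FiniteDimensional k D.1 := D.2.2.1
        Subspace.dualCoannihilator_dualAnnihilator_eq
     right_inv := fun _ => Subtype.ext Subspace.dualAnnihilator_dualCoannihilator_eq },
    fun _ a => Submodule.mem_dualCoannihilator a⟩
end

section
/- If D is a simple k-coalgebra, then its dual algebra D* (with convolution product) is a simple k-algebra. -/
open TensorProduct

/-- A subspace `E` of a coalgebra `D` is a subcoalgebra if `Δ(E) ⊆ E ⊗ E`. -/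
def IsSubcoalgebra {k D : Type*} [Field k] [AddCommGroup D] [Module k D] [Coalgebra k D]
    (E : Submodule k D) : Prop :=
  ∀ x ∈ E, Coalgebra.comul (R := k) x ∈ LinearMap.range (TensorProduct.map E.subtype E.subtype)

/-- The convolution product on the dual of a coalgebra. -/
noncomputable def conv {k D : Type*} [Field k] [AddCommGroup D] [Module k D]
    [Coalgebra k D] (f g : Module.Dual k D) : Module.Dual k D :=
  (TensorProduct.lid k k).toLinearMap ∘ₗ TensorProduct.map f g ∘ₗ Coalgebra.comul

/-!
The dual `D*` acts on `D` from both sides by `f ⇀ x = x₁ f(x₂)` and `x ↼ f = f(x₁) x₂`. Over a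
field a subspace `E` is a subcoalgebra as soon as it is stable under both actions: stability
under `⇀` puts `Δ(E)` in `E ⊗ D` (membership there is detected by slicing with functionals),
stability under `↼` puts it in `D ⊗ E`, and `(E ⊗ D) ∩ (D ⊗ E) = E ⊗ E`.

Hence the span of all `f ⇀ x ↼ g` is a finite-dimensional subcoalgebra containing `x`, so a simple
coalgebra is finite-dimensional. For a two-sided ideal `J` of `D*`, `j (f ⇀ x) = (j * f) x` shows
that `J^⊥ ⊆ D` is a subcoalgebra, hence `0` or `D`, and in finite dimension `J = (J^⊥)^⊥` is then
`D*` or `0`.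
-/

open LinearMap Coalgebra

section Slices

variable {k M N : Type*} [Field k] [AddCommGroup M] [Module k M] [AddCommGroup N] [Module k N]

theorem TensorProduct.eq_zero_of_forall_lTensor_dual_eq_zero (u : M ⊗[k] N)
    (h : ∀ g : Module.Dual k N, g.lTensor M u = 0) : u = 0 := by
  classical
  let b := Module.Basis.ofVectorSpace k N
  let e := (b.repr.lTensor M).trans (finsuppScalarRight k k M _)
  refine e.map_eq_zero_iff.mp (Finsupp.ext fun i => ?_)
  have hcoord : ∀ v : M ⊗[k] N, e v i = TensorProduct.rid k M ((b.coord i).lTensor M v) := by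
    intro v
    induction v using TensorProduct.induction_on with
    | zero => simp
    | tmul m n => simp [e]
    | add v w hv hw => simp [hv, hw]
  simp [hcoord, h]

theorem mem_range_rTensor_subtype_of_forall (P : Submodule k M) (t : M ⊗[k] N)
    (h : ∀ g : Module.Dual k N, TensorProduct.rid k M (g.lTensor M t) ∈ P) :
    t ∈ range (P.subtype.rTensor N) := by
  rw [← rTensor_mkQ, mem_ker]
  refine eq_zero_of_forall_lTensor_dual_eq_zero _ fun g =>
    (TensorProduct.rid k _).map_eq_zero_iff.mp ?_
  have hnat : ∀ v : M ⊗[k] N, TensorProduct.rid k _ (g.lTensor _ (P.mkQ.rTensor N v)) =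
      P.mkQ (TensorProduct.rid k M (g.lTensor M v)) := by
    intro v
    induction v using TensorProduct.induction_on with
    | zero => simp
    | tmul m n => simp
    | add v w hv hw => simp only [map_add, hv, hw]
  rw [hnat, Submodule.mkQ_apply, Submodule.Quotient.mk_eq_zero]
  exact h g

theorem mem_range_lTensor_subtype_of_forall (Q : Submodule k N) (t : M ⊗[k] N)
    (h : ∀ f : Module.Dual k M, TensorProduct.lid k N (f.rTensor N t) ∈ Q) :
    t ∈ range (Q.subtype.lTensor M) := by
  obtain ⟨s, hs⟩ := mem_range_rTensor_subtype_of_forall Q (TensorProduct.comm k M N t) fun f => by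
    simpa [lTensor_comm] using h f
  refine ⟨TensorProduct.comm k _ M s, ?_⟩
  rw [lTensor_comm, hs, TensorProduct.comm_comm]

theorem mem_range_map_subtype_of_forall (P : Submodule k M) (Q : Submodule k N) (t : M ⊗[k] N)
    (hP : ∀ g : Module.Dual k N, TensorProduct.rid k M (g.lTensor M t) ∈ P)
    (hQ : ∀ f : Module.Dual k M, TensorProduct.lid k N (f.rTensor N t) ∈ Q) :
    t ∈ range (TensorProduct.map P.subtype Q.subtype) := by
  obtain ⟨s, rfl⟩ := mem_range_rTensor_subtype_of_forall P t hP
  obtain ⟨r, rfl⟩ := mem_range_lTensor_subtype_of_forall Q s fun f => by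
    obtain ⟨f', rfl⟩ := f.exists_extend
    simpa [← LinearMap.comp_apply (f'.rTensor N), ← rTensor_comp] using hQ f'
  exact ⟨r, by rw [← LinearMap.comp_apply, rTensor_comp_lTensor]⟩

end Slices

section CommSemiring

variable {R C : Type*} [CommSemiring R] [AddCommMonoid C] [Module R C] [Coalgebra R C]

/-- `f ⇀ x = x₁ f(x₂)` in Sweedler notation. -/
noncomputable def leftHit (f : Module.Dual R C) : C →ₗ[R] C :=
  (TensorProduct.rid R C).toLinearMap ∘ₗ f.lTensor C ∘ₗ comul

/-- `x ↼ f = f(x₁) x₂` in Sweedler notation. -/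
noncomputable def rightHit (f : Module.Dual R C) : C →ₗ[R] C :=
  (TensorProduct.lid R C).toLinearMap ∘ₗ f.rTensor C ∘ₗ comul

variable (f g : Module.Dual R C) (x : C)

theorem leftHit_apply : leftHit f x = TensorProduct.rid R C (f.lTensor C (comul x)) := rfl

theorem rightHit_apply : rightHit f x = TensorProduct.lid R C (f.rTensor C (comul x)) := rfl

@[simp] theorem leftHit_counit : leftHit (counit (R := R)) x = x := by simp [leftHit_apply]

@[simp] theorem rightHit_counit : rightHit (counit (R := R)) x = x := by simp [rightHit_apply]

theorem comul_leftHit : comul (leftHit f x) = (leftHit f).lTensor C (comul x) := by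
  have hnat : comul ∘ₗ (TensorProduct.rid R C).toLinearMap ∘ₗ f.lTensor C =
      (TensorProduct.rid R (C ⊗[R] C)).toLinearMap ∘ₗ f.lTensor (C ⊗[R] C) ∘ₗ comul.rTensor C :=
    TensorProduct.ext' fun a b => by simp
  have hassoc : (TensorProduct.rid R (C ⊗[R] C)).toLinearMap ∘ₗ f.lTensor (C ⊗[R] C) ∘ₗ
      (TensorProduct.assoc R C C C).symm.toLinearMap =
      ((TensorProduct.rid R C).toLinearMap ∘ₗ f.lTensor C).lTensor C := by
    ext a b c
    simp
  calc comul (leftHit f x)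
      = (TensorProduct.rid R (C ⊗[R] C)) (f.lTensor (C ⊗[R] C) (comul.rTensor C (comul x))) :=
        congr($hnat (comul x))
    _ = (leftHit f).lTensor C (comul x) := by
        rw [← coassoc_symm_apply, leftHit, ← LinearMap.comp_assoc, lTensor_comp_apply, ← hassoc]
        rfl

theorem comul_rightHit : comul (rightHit f x) = (rightHit f).rTensor C (comul x) := by
  have hnat : comul ∘ₗ (TensorProduct.lid R C).toLinearMap ∘ₗ f.rTensor C =
      (TensorProduct.lid R (C ⊗[R] C)).toLinearMap ∘ₗ f.rTensor (C ⊗[R] C) ∘ₗ comul.lTensor C :=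
    TensorProduct.ext' fun a b => by simp
  have hassoc : (TensorProduct.lid R (C ⊗[R] C)).toLinearMap ∘ₗ f.rTensor (C ⊗[R] C) ∘ₗ
      (TensorProduct.assoc R C C C).toLinearMap =
      ((TensorProduct.lid R C).toLinearMap ∘ₗ f.rTensor C).rTensor C := by
    ext a b c
    simp [TensorProduct.smul_tmul']
  calc comul (rightHit f x)
      = (TensorProduct.lid R (C ⊗[R] C)) (f.rTensor (C ⊗[R] C) (comul.lTensor C (comul x))) :=
        congr($hnat (comul x))
    _ = (rightHit f).rTensor C (comul x) := by
        rw [← coassoc_apply, rightHit, ← LinearMap.comp_assoc, rTensor_comp_apply, ← hassoc]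
        rfl

theorem leftHit_rightHit : leftHit f (rightHit g x) = rightHit g (leftHit f x) := by
  have hnat : ∀ t : C ⊗[R] C, TensorProduct.rid R C (f.lTensor C ((rightHit g).rTensor C t)) =
      rightHit g (TensorProduct.rid R C (f.lTensor C t)) := by
    intro t
    induction t using TensorProduct.induction_on with
    | zero => simp
    | tmul a b => simp
    | add s t hs ht => simp only [map_add, hs, ht]
  rw [leftHit_apply f, comul_rightHit, hnat, leftHit_apply]

theorem leftHit_mem_span_left {ι : Type*} (𝓡 : Repr R x ι) :
    leftHit f x ∈ Submodule.span R (𝓡.left '' 𝓡.index) := by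
  rw [leftHit_apply, ← 𝓡.eq]
  simp only [map_sum, lTensor_tmul, rid_tmul]
  exact Submodule.sum_mem _ fun i hi =>
    Submodule.smul_mem _ _ (Submodule.subset_span ⟨i, hi, rfl⟩)

theorem rightHit_mem_span_right {ι : Type*} (𝓡 : Repr R x ι) :
    rightHit f x ∈ Submodule.span R (𝓡.right '' 𝓡.index) := by
  rw [rightHit_apply, ← 𝓡.eq]
  simp only [map_sum, rTensor_tmul, lid_tmul]
  exact Submodule.sum_mem _ fun i hi =>
    Submodule.smul_mem _ _ (Submodule.subset_span ⟨i, hi, rfl⟩)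

end CommSemiring

section Field

variable {k D : Type*} [Field k] [AddCommGroup D] [Module k D] [Coalgebra k D]

theorem comp_leftHit (f g : Module.Dual k D) : f ∘ₗ leftHit g = conv f g := by
  have h : f ∘ₗ (TensorProduct.rid k D).toLinearMap ∘ₗ g.lTensor D =
      (TensorProduct.lid k k).toLinearMap ∘ₗ TensorProduct.map f g :=
    TensorProduct.ext' fun a b => by simp [mul_comm]
  exact LinearMap.ext fun x => congr($h (comul x))

theorem comp_rightHit (f g : Module.Dual k D) : f ∘ₗ rightHit g = conv g f := by
  have h : f ∘ₗ (TensorProduct.lid k D).toLinearMap ∘ₗ g.rTensor D =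
      (TensorProduct.lid k k).toLinearMap ∘ₗ TensorProduct.map g f :=
    TensorProduct.ext' fun a b => by simp
  exact LinearMap.ext fun x => congr($h (comul x))

theorem leftHit_leftHit (f g : Module.Dual k D) (x : D) :
    leftHit f (leftHit g x) = leftHit (conv f g) x := by
  rw [leftHit_apply f, comul_leftHit, ← lTensor_comp_apply, comp_leftHit]
  rfl

theorem rightHit_rightHit (f g : Module.Dual k D) (x : D) :
    rightHit f (rightHit g x) = rightHit (conv g f) x := by
  rw [rightHit_apply f, comul_rightHit, ← rTensor_comp_apply, comp_rightHit]
  rfl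

theorem isSubcoalgebra_of_forall_hit_mem (E : Submodule k D)
    (hleft : ∀ x ∈ E, ∀ f : Module.Dual k D, leftHit f x ∈ E)
    (hright : ∀ x ∈ E, ∀ f : Module.Dual k D, rightHit f x ∈ E) : IsSubcoalgebra E :=
  fun x hx => mem_range_map_subtype_of_forall E E _ (hleft x hx) (hright x hx)

theorem isSubcoalgebra_dualCoannihilator (J : Submodule k (Module.Dual k D))
    (hJ : ∀ f ∈ J, ∀ g : Module.Dual k D, conv g f ∈ J ∧ conv f g ∈ J) :
    IsSubcoalgebra J.dualCoannihilator := by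
  refine isSubcoalgebra_of_forall_hit_mem _ (fun x hx f => ?_) (fun x hx f => ?_) <;>
    refine (Submodule.mem_dualCoannihilator _).mpr fun j hj => ?_
  · rw [← LinearMap.comp_apply, comp_leftHit]
    exact (Submodule.mem_dualCoannihilator x).mp hx _ (hJ j hj f).2
  · rw [← LinearMap.comp_apply, comp_rightHit]
    exact (Submodule.mem_dualCoannihilator x).mp hx _ (hJ j hj f).1

variable (k) in
noncomputable def hitSpan (x : D) : Submodule k D :=
  Submodule.span k
    (Set.range fun p : Module.Dual k D × Module.Dual k D => leftHit p.1 (rightHit p.2 x))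

theorem mem_hitSpan_self (x : D) : x ∈ hitSpan k x := by
  have h : leftHit counit (rightHit counit x) ∈ hitSpan k x :=
    Submodule.subset_span ⟨(counit, counit), rfl⟩
  simpa using h

theorem leftHit_mem_hitSpan (x : D) {y : D} (hy : y ∈ hitSpan k x) (f : Module.Dual k D) :
    leftHit f y ∈ hitSpan k x := by
  refine (Submodule.span_le (p := (hitSpan k x).comap (leftHit f))).mpr ?_ hy
  rintro _ ⟨⟨g, h⟩, rfl⟩
  exact Submodule.subset_span ⟨(conv f g, h), (leftHit_leftHit f g _).symm⟩

theorem rightHit_mem_hitSpan (x : D) {y : D} (hy : y ∈ hitSpan k x) (f : Module.Dual k D) :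
    rightHit f y ∈ hitSpan k x := by
  refine (Submodule.span_le (p := (hitSpan k x).comap (rightHit f))).mpr ?_ hy
  rintro _ ⟨⟨g, h⟩, rfl⟩
  exact Submodule.subset_span ⟨(g, conv h f), by rw [← leftHit_rightHit, rightHit_rightHit]⟩

theorem isSubcoalgebra_hitSpan (x : D) : IsSubcoalgebra (hitSpan k x) :=
  isSubcoalgebra_of_forall_hit_mem _ (fun _ hy f => leftHit_mem_hitSpan x hy f)
    (fun _ hy f => rightHit_mem_hitSpan x hy f)

theorem finiteDimensional_hitSpan (x : D) : FiniteDimensional k (hitSpan k x) := by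
  let 𝓡 := ℛ k x
  let T := ⋃ y ∈ 𝓡.right '' 𝓡.index, (ℛ k y).left '' (ℛ k y).index
  have hT : T.Finite :=
    ((𝓡.index.finite_toSet.image _).biUnion fun y _ => (ℛ k y).index.finite_toSet.image _)
  have hle : hitSpan k x ≤ Submodule.span k T := by
    refine Submodule.span_le.mpr ?_
    rintro _ ⟨⟨f, g⟩, rfl⟩
    refine (Submodule.span_le (p := (Submodule.span k T).comap (leftHit f))).mpr ?_
      (rightHit_mem_span_right g x 𝓡)
    intro y hy
    exact Submodule.span_mono (Set.subset_biUnion_of_mem hy) (leftHit_mem_span_left f y (ℛ k y))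
  have := FiniteDimensional.span_of_finite k hT
  exact Submodule.finiteDimensional_of_le hle

theorem finiteDimensional_of_forall_isSubcoalgebra [Nontrivial D]
    (hsimple : ∀ E : Submodule k D, IsSubcoalgebra E → E = ⊥ ∨ E = ⊤) :
    FiniteDimensional k D := by
  obtain ⟨x, hx⟩ := exists_ne (0 : D)
  rcases hsimple _ (isSubcoalgebra_hitSpan x) with h | h
  · have hmem := mem_hitSpan_self (k := k) x
    rw [h, Submodule.mem_bot] at hmem
    exact absurd hmem hx
  · have := finiteDimensional_hitSpan (k := k) x
    rw [h] at this
    exact Module.Finite.equiv Submodule.topEquiv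

end Field

/-- If `D` is a simple `k`-coalgebra, then the dual convolution algebra `D*` is a simple
`k`-algebra: it is nonzero and every two-sided ideal (a subspace closed under left and
right convolution by arbitrary functionals) is `0` or all of `D*`. -/
theorem dual_of_simple_coalgebra_is_simple (k D : Type*) [Field k] [AddCommGroup D]
    [Module k D] [Coalgebra k D] [Nontrivial D]
    (hsimple : ∀ E : Submodule k D, IsSubcoalgebra E → E = ⊥ ∨ E = ⊤) :
    Nontrivial (Module.Dual k D) ∧
    ∀ J : Submodule k (Module.Dual k D),
      (∀ f ∈ J, ∀ g : Module.Dual k D, conv g f ∈ J ∧ conv f g ∈ J) →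
      J = ⊥ ∨ J = ⊤ := by
  refine ⟨inferInstance, fun J hJ => ?_⟩
  have := finiteDimensional_of_forall_isSubcoalgebra hsimple
  rw [← Subspace.dualCoannihilator_dualAnnihilator_eq (W := J)]
  rcases hsimple _ (isSubcoalgebra_dualCoannihilator J hJ) with h | h <;> simp [h]
end
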